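/- arXiv:1706.09770 — 7 statements merged into one kernel-verified Lean document; each statement's English description precedes it below -/
import Mathlib

section
/- Let Λ be a numerical semigroup of genus g with elements λ₀ = 0 < λ₁ < ⋯. Let g(i) be the number of gaps smaller than λᵢ and G(i) the number of pairs of gaps adding up to λᵢ. Then ν_i = i - g(i) + G(i) + 1, where ν_i = #D(i) = #{λⱼ ≤ λᵢ : λᵢ - λⱼ ∈ Λ}. -/
/-!
Classify the integers `0 ≤ x ≤ λᵢ` by whether `x` and `λᵢ - x` lie in `Λ`. Inclusion–exclusion
gives `ν + #{x : λᵢ - x ∉ Λ} = #{x : x ∈ Λ} + #{x : x ∉ Λ, λᵢ - x ∉ Λ}`. The reflection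
`x ↦ λᵢ - x` turns the second term into the number `g(i)` of gaps below `λᵢ`, the third term is
`i + 1` because `λ₀ < ⋯ < λᵢ` are the elements of `Λ` up to `λᵢ`, and the last one is `G(i)`.
-/

open Finset

theorem Finset.card_filter_and_add_card_filter_not {α : Type*} (s : Finset α) (p q : α → Prop)
    [DecidablePred p] [DecidablePred q] :
    #(s.filter fun a ↦ p a ∧ q a) + #(s.filter fun a ↦ ¬q a) =
      #(s.filter p) + #(s.filter fun a ↦ ¬p a ∧ ¬q a) := by
  rw [← card_filter_add_card_filter_not (s := s.filter p) q,
    ← card_filter_add_card_filter_not (s := s.filter fun a ↦ ¬q a) p]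
  simp only [filter_filter, and_comm (a := ¬q _)]
  omega

theorem Finset.Nat.card_filter_antidiagonal (n : ℕ) (P : ℕ × ℕ → Prop) [DecidablePred P] :
    #((antidiagonal n).filter P) = #((range (n + 1)).filter fun i ↦ P (i, n - i)) := by
  rw [Nat.antidiagonal_eq_map, filter_map, card_map]
  rfl

theorem Finset.Nat.card_filter_range_sub (n : ℕ) (P : ℕ → Prop) [DecidablePred P] :
    #((range (n + 1)).filter fun i ↦ P (n - i)) = #((range (n + 1)).filter P) := by
  have h := card_filter_antidiagonal n fun p ↦ P p.2
  rw [← HasAntidiagonal.map_swap_antidiagonal, filter_map, card_map,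
    card_filter_antidiagonal] at h
  exact h.symm

theorem StrictMono.card_filter_range_mem_range {f : ℕ → ℕ} (hf : StrictMono f) (i : ℕ)
    [DecidablePred (· ∈ Set.range f)] :
    #((range (f i + 1)).filter (· ∈ Set.range f)) = i + 1 := by
  have : (range (f i + 1)).filter (· ∈ Set.range f) = (range (i + 1)).image f := by
    ext x
    simp only [mem_filter, mem_range, Nat.lt_succ_iff, Set.mem_range, mem_image]
    constructor
    · rintro ⟨hx, j, rfl⟩
      exact ⟨j, hf.le_iff_le.mp hx, rfl⟩
    · rintro ⟨j, hj, rfl⟩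
      exact ⟨hf.monotone hj, j, rfl⟩
  rw [this, card_image_of_injective _ hf.injective, card_range]

section

variable (Λ : Set ℕ) [DecidablePred (· ∈ Λ)] (n : ℕ)

theorem natCard_setOf_mem_sub_mem :
    Nat.card {x : ℕ | x ∈ Λ ∧ x ≤ n ∧ n - x ∈ Λ} =
      #((range (n + 1)).filter fun x ↦ x ∈ Λ ∧ n - x ∈ Λ) := by
  rw [← Set.ncard_coe_finset, ← Nat.card_coe_set_eq, coe_filter]
  congr 2 with x
  simp only [Set.mem_ofPred_eq, mem_range, Nat.lt_succ_iff]
  tauto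

theorem natCard_setOf_notMem_lt (hn : n ∈ Λ) :
    Nat.card {x : ℕ | x ∉ Λ ∧ x < n} = #((range (n + 1)).filter (· ∉ Λ)) := by
  rw [← Set.ncard_coe_finset, ← Nat.card_coe_set_eq, coe_filter]
  congr 2 with x
  simp only [Set.mem_ofPred_eq, mem_range, Nat.lt_succ_iff]
  constructor
  · exact fun ⟨hx, hlt⟩ ↦ ⟨hlt.le, hx⟩
  · exact fun ⟨hle, hx⟩ ↦ ⟨hx, hle.lt_of_ne (by rintro rfl; exact hx hn)⟩

theorem natCard_setOf_notMem_add_eq :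
    Nat.card {p : ℕ × ℕ | p.1 ∉ Λ ∧ p.2 ∉ Λ ∧ p.1 + p.2 = n} =
      #((range (n + 1)).filter fun x ↦ x ∉ Λ ∧ n - x ∉ Λ) := by
  have : {p : ℕ × ℕ | p.1 ∉ Λ ∧ p.2 ∉ Λ ∧ p.1 + p.2 = n} =
      ↑((antidiagonal n).filter fun p ↦ p.1 ∉ Λ ∧ p.2 ∉ Λ) := by
    ext p
    simp only [Set.mem_ofPred_eq, coe_filter, HasAntidiagonal.mem_antidiagonal]
    tauto
  rw [this, Nat.card_coe_set_eq, Set.ncard_coe_finset, Nat.card_filter_antidiagonal]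

end

theorem nu_eq_general
    (Λ : Set ℕ)
    (lam : ℕ → ℕ) (hmono : StrictMono lam) (hrange : Set.range lam = Λ)
    (i : ℕ) (gi Gi nu : ℕ)
    (hgi : gi = Nat.card {h : ℕ | h ∉ Λ ∧ h < lam i})
    (hGi : Gi = Nat.card {p : ℕ × ℕ | p.1 ∉ Λ ∧ p.2 ∉ Λ ∧ p.1 + p.2 = lam i})
    (hnu : nu = Nat.card {x : ℕ | x ∈ Λ ∧ x ≤ lam i ∧ lam i - x ∈ Λ}) :
    (nu : ℤ) = (i : ℤ) - gi + Gi + 1 := by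
  classical
  have hcount := card_filter_and_add_card_filter_not (range (lam i + 1))
    (· ∈ Λ) (fun x ↦ lam i - x ∈ Λ)
  rw [Nat.card_filter_range_sub (lam i) (· ∉ Λ), ← hrange,
    hmono.card_filter_range_mem_range, hrange] at hcount
  rw [hnu, hgi, hGi, natCard_setOf_mem_sub_mem,
    natCard_setOf_notMem_lt _ _ (hrange ▸ ⟨i, rfl⟩), natCard_setOf_notMem_add_eq]
  omega

theorem nu_eq
    (Λ : Set ℕ) (h0 : 0 ∈ Λ) (hadd : ∀ a ∈ Λ, ∀ b ∈ Λ, a + b ∈ Λ)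
    (hfin : {n : ℕ | n ∉ Λ}.Finite)
    (lam : ℕ → ℕ) (hmono : StrictMono lam) (hrange : Set.range lam = Λ)
    (i : ℕ) (gi Gi nu : ℕ)
    (hgi : gi = Nat.card {h : ℕ | h ∉ Λ ∧ h < lam i})
    (hGi : Gi = Nat.card {p : ℕ × ℕ | p.1 ∉ Λ ∧ p.2 ∉ Λ ∧ p.1 + p.2 = lam i})
    (hnu : nu = Nat.card {x : ℕ | x ∈ Λ ∧ x ≤ lam i ∧ lam i - x ∈ Λ}) :
    (nu : ℤ) = (i : ℤ) - gi + Gi + 1 :=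
  nu_eq_general Λ lam hmono hrange i gi Gi nu hgi hGi hnu
end

section
/- Let Λ be a numerical semigroup of genus g and I an ideal of Λ with difference d > 0. The largest integer not in I equals d + 2g - 1 if and only if Λ \ I = {λ ∈ Λ : d + 2g - 1 - λ ∈ Λ}. -/
/-!
For `x ∉ I`, the map `b ↦ x - b` sends `Λ ∩ [0, x]` injectively into `ℕ \ I`, since
`(x - b) + b = x`; the remaining points of `[0, x]` are gaps of `Λ`. Hence
`x + 1 ≤ #(ℕ \ I) + g = d + 2g`, and for `I = Λ` this says every gap is below `2g`.
If `F = d + 2g - 1` itself lies outside `I`, all counts are tight, so the injection is onto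
`ℕ \ I`: every `y ∉ I` has the form `F - b` with `b ∈ Λ`. That is the inclusion
`Λ \ I ⊆ {x ∈ Λ | F - x ∈ Λ}`; the other inclusion, and the converse (where `d > 0` forces
`F ≥ 2g`, so `F ∈ Λ`), are immediate.
-/

open Set

namespace NumericalSemigroup

variable {Λ I : Set ℕ}

theorem sub_notMem_of_notMem (hIdeal : ∀ x ∈ I, ∀ y ∈ Λ, x + y ∈ I) {x b : ℕ} (hx : x ∉ I)
    (hb : b ∈ Λ) (hbx : b ≤ x) : x - b ∉ I := fun hxb ↦
  hx (Nat.sub_add_cancel hbx ▸ hIdeal _ hxb b hb)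

theorem injOn_sub_Iic (x : ℕ) (s : Set ℕ) : InjOn (x - ·) (s ∩ Iic x) := by
  intro a ha b hb hab
  simp only [mem_inter_iff, mem_Iic] at ha hb
  simp only at hab
  omega

theorem ncard_inter_Iic_le_ncard_compl (hIdeal : ∀ x ∈ I, ∀ y ∈ Λ, x + y ∈ I)
    (hI : Iᶜ.Finite) {x : ℕ} (hx : x ∉ I) : (Λ ∩ Iic x).ncard ≤ Iᶜ.ncard :=
  ncard_le_ncard_of_injOn _ (fun _ hb ↦ sub_notMem_of_notMem hIdeal hx hb.1 hb.2)
    (injOn_sub_Iic x Λ) hI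

theorem add_one_le_of_notMem (hIdeal : ∀ x ∈ I, ∀ y ∈ Λ, x + y ∈ I) (hΛ : Λᶜ.Finite)
    (hI : Iᶜ.Finite) {x : ℕ} (hx : x ∉ I) : x + 1 ≤ Iᶜ.ncard + Λᶜ.ncard := by
  have hgaps : (Iic x \ Λ).ncard ≤ Λᶜ.ncard :=
    ncard_le_ncard (fun _ hb ↦ hb.2) hΛ
  calc x + 1 = (Iic x ∩ Λ).ncard + (Iic x \ Λ).ncard := by
        rw [ncard_inter_add_ncard_sdiff_eq_ncard _ _ (finite_Iic x), ncard_Iic_nat]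
    _ ≤ Iᶜ.ncard + Λᶜ.ncard := by
        rw [inter_comm]
        exact add_le_add (ncard_inter_Iic_le_ncard_compl hIdeal hI hx) hgaps

theorem add_one_le_two_mul_ncard_compl (hadd : ∀ a ∈ Λ, ∀ b ∈ Λ, a + b ∈ Λ)
    (hΛ : Λᶜ.Finite) {n : ℕ} (hn : n ∉ Λ) : n + 1 ≤ 2 * Λᶜ.ncard := by
  have := add_one_le_of_notMem hadd hΛ hΛ hn
  omega

theorem ncard_compl_eq_add (hIsub : I ⊆ Λ) (hΛ : Λᶜ.Finite) (hfin : (Λ \ I).Finite) :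
    Iᶜ.ncard = Λᶜ.ncard + (Λ \ I).ncard := by
  have hsplit : Iᶜ = Λᶜ ∪ (Λ \ I) := by
    ext n
    by_cases hn : n ∈ Λ
    · simp [hn]
    · simpa [hn] using fun h ↦ hn (hIsub h)
  rw [hsplit, ncard_union_eq (disjoint_compl_left.mono_right sdiff_subset) hΛ hfin]

theorem image_sub_inter_Iic_eq_compl (hIdeal : ∀ x ∈ I, ∀ y ∈ Λ, x + y ∈ I) (hIsub : I ⊆ Λ)
    (hΛ : Λᶜ.Finite) (hI : Iᶜ.Finite) {F : ℕ} (hF : F + 1 = Iᶜ.ncard + Λᶜ.ncard)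
    (hFI : F ∉ I) : (F - ·) '' (Λ ∩ Iic F) = Iᶜ := by
  have hle : ∀ z ∉ I, z ≤ F := fun z hz ↦ by
    have := add_one_le_of_notMem hIdeal hΛ hI hz
    omega
  have hgaps : Iic F \ Λ = Λᶜ :=
    sdiff_eq_compl_inter.trans (inter_eq_left.mpr fun n hn ↦ hle n fun h ↦ hn (hIsub h))
  have hcard : (Λ ∩ Iic F).ncard = Iᶜ.ncard := by
    have := ncard_inter_add_ncard_sdiff_eq_ncard (Iic F) Λ (finite_Iic F)
    rw [hgaps, ncard_Iic_nat, inter_comm] at this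
    omega
  refine eq_of_subset_of_ncard_le ?_ ?_ hI
  · rintro _ ⟨b, hb, rfl⟩
    exact sub_notMem_of_notMem hIdeal hFI hb.1 hb.2
  · rw [(injOn_sub_Iic F Λ).ncard_image, hcard]

theorem sub_mem_of_notMem_of_extremal (hIdeal : ∀ x ∈ I, ∀ y ∈ Λ, x + y ∈ I) (hIsub : I ⊆ Λ)
    (hΛ : Λᶜ.Finite) (hI : Iᶜ.Finite) {F : ℕ} (hF : F + 1 = Iᶜ.ncard + Λᶜ.ncard)
    (hFI : F ∉ I) {y : ℕ} (hy : y ∉ I) : F - y ∈ Λ := by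
  obtain ⟨b, ⟨hbΛ, hbF⟩, rfl⟩ : y ∈ (F - ·) '' (Λ ∩ Iic F) :=
    (image_sub_inter_Iic_eq_compl hIdeal hIsub hΛ hI hF hFI).symm ▸ hy
  rw [Nat.sub_sub_self hbF]
  exact hbΛ

end NumericalSemigroup

open NumericalSemigroup in
theorem ideal_attains_bound_iff_complement
    (Λ I : Set ℕ) (h0 : 0 ∈ Λ) (hadd : ∀ a ∈ Λ, ∀ b ∈ Λ, a + b ∈ Λ)
    (hfinΛ : {n : ℕ | n ∉ Λ}.Finite)
    (hIsub : I ⊆ Λ) (hIdeal : ∀ x ∈ I, ∀ y ∈ Λ, x + y ∈ I)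
    (hfinI : (Λ \ I).Finite)
    (g d : ℕ) (hg : g = Nat.card {n : ℕ | n ∉ Λ})
    (hd : d = Nat.card ↥(Λ \ I)) (hdpos : 0 < d) :
    IsGreatest {n : ℕ | n ∉ I} (d + 2 * g - 1) ↔
      Λ \ I = {x : ℕ | x ∈ Λ ∧ x ≤ d + 2 * g - 1 ∧ d + 2 * g - 1 - x ∈ Λ} := by
  set F := d + 2 * g - 1
  have hΛ : Λᶜ.Finite := hfinΛ
  have hgenus : Λᶜ.ncard = g := by rw [hg, Nat.card_coe_set_eq]; rfl
  have hcard : Iᶜ.ncard = g + d := by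
    rw [ncard_compl_eq_add hIsub hΛ hfinI, hgenus, hd, Nat.card_coe_set_eq]
  have hI : Iᶜ.Finite := Set.finite_of_ncard_pos (by omega)
  have hbound : ∀ x ∉ I, x ≤ F := fun x hx ↦ by
    have := add_one_le_of_notMem hIdeal hΛ hI hx
    omega
  constructor
  · rintro ⟨hFI, -⟩
    ext x
    refine ⟨fun ⟨hxΛ, hxI⟩ ↦ ⟨hxΛ, hbound x hxI, ?_⟩, fun ⟨hxΛ, hxF, hFx⟩ ↦ ⟨hxΛ, fun hxI ↦ ?_⟩⟩
    · exact sub_mem_of_notMem_of_extremal hIdeal hIsub hΛ hI (by omega) hFI hxI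
    · exact hFI (Nat.add_sub_cancel' hxF ▸ hIdeal x hxI _ hFx)
  · intro hEq
    have hFΛ : F ∈ Λ := by
      by_contra hF
      have := add_one_le_two_mul_ncard_compl hadd hΛ hF
      omega
    have hFI : F ∈ Λ \ I := hEq ▸ ⟨hFΛ, le_rfl, by simpa using h0⟩
    exact ⟨hFI.2, hbound⟩
end

section
/- Let Λ be a symmetric numerical semigroup of genus g and let I be an ideal of Λ with difference d > 0. Then the largest integer not in I equals d + 2g - 1 if and only if I is a principal ideal a + Λ for some a ∈ Λ, a > 0. -/
/-!
Write `F = 2g - 1` for the largest gap of `Λ`. Since `I ⊆ Λ`, the complement of `I` consists of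
the `g` gaps of `Λ` and the `d` elements of `Λ \ I`. If `n ∉ I`, then `x ↦ n - x` maps
`Λ ∩ [0, n]` injectively into the complement of `I`, because `n - x ∈ I` would give `n ∈ I`.
For `n = d + F`, the set `Λ ∩ [0, n]` has `n + 1 - g = d + g` elements, so this map is a
bijection. As `n - F = d` and `F ∉ Λ`, it follows that `d ∈ I`. Hence `d + Λ ⊆ I`, and these two
sets are equal because the complement of `a + Λ` is `[0, a) ∪ (a + gaps)`, which has `a + g`
elements. Conversely, this description of the complement shows that `a + Λ` has difference `a`
and that its largest non-element is `a + F`.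
-/

open Set

namespace NumericalSemigroup

variable {Λ I : Set ℕ} {F : ℕ}

theorem finite_compl_of_isGreatest (hF : IsGreatest Λᶜ F) : Λᶜ.Finite :=
  (finite_Iic F).subset fun _ hx => hF.2 hx

theorem ncard_compl_pos (hF : IsGreatest Λᶜ F) : 0 < Λᶜ.ncard :=
  (ncard_pos (finite_compl_of_isGreatest hF)).2 ⟨F, hF.1⟩

theorem ncard_inter_Iic_add_ncard_compl (hF : IsGreatest Λᶜ F) {n : ℕ} (hn : F ≤ n) :
    (Λ ∩ Iic n).ncard + Λᶜ.ncard = n + 1 := by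
  have hdiff : Iic n \ Λ = Λᶜ := by
    ext x
    simp only [mem_sdiff, mem_Iic, mem_compl_iff, and_iff_right_iff_imp]
    exact fun hx => (hF.2 hx).trans hn
  rw [inter_comm, ← hdiff, ncard_inter_add_ncard_sdiff_eq_ncard _ _ (finite_Iic n),
    ← Finset.coe_Iic, ncard_coe_finset, Nat.card_Iic]

theorem compl_eq_compl_union_sdiff (hIΛ : I ⊆ Λ) : Iᶜ = Λᶜ ∪ (Λ \ I) := by
  ext x
  simp only [mem_compl_iff, mem_union, mem_sdiff]
  by_cases hx : x ∈ Λ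
  · simp [hx]
  · exact iff_of_true (fun h => hx (hIΛ h)) (Or.inl hx)

theorem finite_compl_of_subset (hIΛ : I ⊆ Λ) (hΛ : Λᶜ.Finite) (hI : (Λ \ I).Finite) :
    Iᶜ.Finite :=
  compl_eq_compl_union_sdiff hIΛ ▸ hΛ.union hI

theorem ncard_compl_eq_add_ncard_sdiff (hIΛ : I ⊆ Λ) (hΛ : Λᶜ.Finite) (hI : (Λ \ I).Finite) :
    Iᶜ.ncard = Λᶜ.ncard + (Λ \ I).ncard := by
  rw [compl_eq_compl_union_sdiff hIΛ,
    ncard_union_eq (disjoint_compl_left.mono_right sdiff_subset) hΛ hI]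

theorem compl_image_add (a : ℕ) (Λ : Set ℕ) :
    ((a + ·) '' Λ)ᶜ = Iio a ∪ (a + ·) '' Λᶜ := by
  ext x
  simp only [mem_compl_iff, mem_image, mem_union, mem_Iio]
  constructor
  · intro hx
    refine (lt_or_ge x a).imp_right fun hax => ⟨x - a, fun h => hx ⟨x - a, h, by omega⟩, by omega⟩
  · rintro (hxa | ⟨y, hy, rfl⟩) ⟨z, hz, hzx⟩
    · omega
    · exact hy (add_left_cancel hzx ▸ hz)

theorem finite_compl_image_add (a : ℕ) (hΛ : Λᶜ.Finite) : ((a + ·) '' Λ)ᶜ.Finite :=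
  compl_image_add a Λ ▸ (finite_Iio a).union (hΛ.image _)

theorem ncard_compl_image_add (a : ℕ) (hΛ : Λᶜ.Finite) :
    ((a + ·) '' Λ)ᶜ.ncard = a + Λᶜ.ncard := by
  have hdisj : Disjoint (Iio a) ((a + ·) '' Λᶜ) := by
    rw [disjoint_left]
    rintro x hx ⟨y, -, rfl⟩
    exact (not_lt.2 (Nat.le_add_right a y)) hx
  rw [compl_image_add, ncard_union_eq hdisj (finite_Iio a) (hΛ.image _),
    ncard_image_of_injective _ (add_right_injective a), ← Finset.coe_Iio, ncard_coe_finset,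
    Nat.card_Iio]

theorem isGreatest_compl_image_add (a : ℕ) (hF : IsGreatest Λᶜ F) :
    IsGreatest ((a + ·) '' Λ)ᶜ (a + F) := by
  rw [compl_image_add]
  refine ⟨Or.inr (mem_image_of_mem _ hF.1), ?_⟩
  rintro x (hx | ⟨y, hy, rfl⟩)
  · exact (Nat.lt_add_right F hx).le
  · exact Nat.add_le_add_left (hF.2 hy) a

theorem image_sub_subset_compl (hI : ∀ x ∈ I, ∀ y ∈ Λ, x + y ∈ I) {n : ℕ} (hn : n ∉ I) :
    (n - ·) '' (Λ ∩ Iic n) ⊆ Iᶜ := by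
  rintro _ ⟨y, ⟨hyΛ, hyn⟩, rfl⟩ h
  exact hn (Nat.sub_add_cancel hyn ▸ hI _ h y hyΛ)

theorem image_sub_eq_compl_of_ncard_le (hI : ∀ x ∈ I, ∀ y ∈ Λ, x + y ∈ I) {n : ℕ} (hn : n ∉ I)
    (hfin : Iᶜ.Finite) (hcard : Iᶜ.ncard ≤ (Λ ∩ Iic n).ncard) :
    (n - ·) '' (Λ ∩ Iic n) = Iᶜ := by
  have hinj : InjOn (n - ·) (Λ ∩ Iic n) := fun x hx y hy hxy => by
    simp only [mem_inter_iff, mem_Iic] at hx hy hxy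
    omega
  exact eq_of_subset_of_ncard_le (image_sub_subset_compl hI hn) (hinj.ncard_image ▸ hcard) hfin

theorem image_add_eq_setOf (a : ℕ) (Λ : Set ℕ) :
    (a + ·) '' Λ = {x | ∃ l ∈ Λ, x = a + l} := by
  ext x
  simp [eq_comm]

end NumericalSemigroup

open NumericalSemigroup

theorem symmetric_ideal_attains_bound_iff_principal_general
    (Λ I : Set ℕ)
    (hIsub : I ⊆ Λ) (hIdeal : ∀ x ∈ I, ∀ y ∈ Λ, x + y ∈ I)
    (g d : ℕ) (hg : g = Nat.card {n : ℕ | n ∉ Λ})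
    (hsym : IsGreatest {n : ℕ | n ∉ Λ} (2 * g - 1))
    (hd : d = Nat.card ↥(Λ \ I)) (hdpos : 0 < d) :
    IsGreatest {n : ℕ | n ∉ I} (d + 2 * g - 1) ↔
      ∃ a ∈ Λ, 0 < a ∧ I = {x : ℕ | ∃ l ∈ Λ, x = a + l} := by
  rw [Nat.card_coe_set_eq] at hg hd
  change g = Λᶜ.ncard at hg
  have hF : IsGreatest Λᶜ (2 * g - 1) := hsym
  have hgpos : 0 < g := hg ▸ ncard_compl_pos hF
  have hΛfin := finite_compl_of_isGreatest hF
  have hdfin : (Λ \ I).Finite := finite_of_ncard_pos (hd ▸ hdpos)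
  have hIfin := finite_compl_of_subset hIsub hΛfin hdfin
  have hIcard : Iᶜ.ncard = g + d := hg ▸ hd ▸ ncard_compl_eq_add_ncard_sdiff hIsub hΛfin hdfin
  rw [show d + 2 * g - 1 = d + (2 * g - 1) by omega]
  constructor
  · intro hmax
    have hreflect := image_sub_eq_compl_of_ncard_le hIdeal hmax.1 hIfin (by
      have := ncard_inter_Iic_add_ncard_compl hF (Nat.le_add_left _ d)
      omega)
    have hdI : d ∈ I := by
      by_contra hdI
      obtain ⟨y, ⟨hyΛ, hyn⟩, hy⟩ := hreflect.superset hdI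
      simp only [mem_Iic] at hy hyn
      exact hF.1 (by rwa [show y = 2 * g - 1 by omega] at hyΛ)
    refine ⟨d, hIsub hdI, hdpos, ?_⟩
    rw [← image_add_eq_setOf]
    have hsub : (d + ·) '' Λ ⊆ I := image_subset_iff.2 fun y hy => hIdeal d hdI y hy
    refine compl_injective (eq_of_subset_of_ncard_le (compl_subset_compl.2 hsub) ?_
      (finite_compl_image_add d hΛfin))
    rw [ncard_compl_image_add d hΛfin, hIcard, ← hg, add_comm]
  · rintro ⟨a, -, -, rfl⟩
    rw [← image_add_eq_setOf] at hIcard ⊢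
    rw [ncard_compl_image_add a hΛfin, ← hg] at hIcard
    exact (show a = d by omega) ▸ isGreatest_compl_image_add a hF

theorem symmetric_ideal_attains_bound_iff_principal
    (Λ I : Set ℕ) (h0 : 0 ∈ Λ) (hadd : ∀ a ∈ Λ, ∀ b ∈ Λ, a + b ∈ Λ)
    (hfinΛ : {n : ℕ | n ∉ Λ}.Finite)
    (hIsub : I ⊆ Λ) (hIdeal : ∀ x ∈ I, ∀ y ∈ Λ, x + y ∈ I)
    (hfinI : (Λ \ I).Finite)
    (g d : ℕ) (hg : g = Nat.card {n : ℕ | n ∉ Λ}) (hgpos : 0 < g)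
    (hsym : IsGreatest {n : ℕ | n ∉ Λ} (2 * g - 1))
    (hd : d = Nat.card ↥(Λ \ I)) (hdpos : 0 < d) :
    IsGreatest {n : ℕ | n ∉ I} (d + 2 * g - 1) ↔
      ∃ a ∈ Λ, 0 < a ∧ I = {x : ℕ | ∃ l ∈ Λ, x = a + l} :=
  symmetric_ideal_attains_bound_iff_principal_general Λ I hIsub hIdeal g d hg hsym hd hdpos
end

section
/- Let Λ be the numerical semigroup generated by the interval {a, a+1, …, a+x-1} with a ≥ 2 and 2 ≤ x. Then the number n_ℓ of maximal intervals of consecutive gaps of Λ of length at least ℓ equals ⌊(a-1-ℓ)/(x-1)⌋ + 1 if 1 ≤ ℓ ≤ a - 1, and 0 if ℓ ≥ a. -/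
/-- Number of maximal intervals of consecutive gaps of `Λ` of length at least `ℓ`,
counted via their starting points. -/
noncomputable def nGapIntervals (Λ : Set ℕ) (ℓ : ℕ) : ℕ :=
  Nat.card {s : ℕ | (∀ k < ℓ, s + k ∉ Λ) ∧ (s = 0 ∨ s - 1 ∈ Λ)}

/-!
The semigroup generated by `[a, b]` is the union of the blocks `[m a, m b]`, `m ∈ ℕ`. Hence every
maximal run of gaps starts right after a block, at `m b + 1`, and runs up to `(m + 1) a - 1`; its
length is `a - 1 - m (b - a)`. Counting the `m` for which this is at least `ℓ` gives the formula.
-/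

open AddSubmonoid (closure_induction subset_closure)

namespace IntervalSemigroup

variable {a b : ℕ}

theorem mem_closure_Icc_iff {n : ℕ} :
    n ∈ AddSubmonoid.closure (Set.Icc a b) ↔ ∃ m, m * a ≤ n ∧ n ≤ m * b := by
  constructor
  · intro hn
    induction hn using closure_induction with
    | mem g hg => exact ⟨1, by simpa using hg.1, by simpa using hg.2⟩
    | zero => exact ⟨0, by simp, by simp⟩
    | add p q _ _ hp hq =>
      obtain ⟨m₁, hp₁, hp₂⟩ := hp
      obtain ⟨m₂, hq₁, hq₂⟩ := hq
      exact ⟨m₁ + m₂, by rw [add_mul]; omega, by rw [add_mul]; omega⟩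
  · rintro ⟨m, hlo, hhi⟩
    induction m generalizing n with
    | zero => simp_all
    | succ m ih =>
      have hab : a ≤ b := Nat.le_of_mul_le_mul_left (hlo.trans hhi) m.succ_pos
      have hmab : m * a ≤ m * b := Nat.mul_le_mul_left m hab
      rw [add_one_mul] at hlo hhi
      -- split off a generator `g` so that `n - g` lies in the `m`-th block
      have hg : max a (n - m * b) ∈ Set.Icc a b := ⟨le_max_left _ _, max_le hab (by omega)⟩
      have := add_mem (ih (n := n - max a (n - m * b)) (by omega) (by omega)) (subset_closure hg)
      rwa [Nat.sub_add_cancel (by omega)] at this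

theorem eq_mul_add_one_of_notMem_of_sub_one_mem {s : ℕ}
    (hs : s ∉ AddSubmonoid.closure (Set.Icc a b))
    (hs' : s - 1 ∈ AddSubmonoid.closure (Set.Icc a b)) : ∃ m, s = m * b + 1 := by
  obtain ⟨m, hlo, hhi⟩ := mem_closure_Icc_iff.mp hs'
  have hs0 : s ≠ 0 := by
    rintro rfl
    exact hs (zero_mem _)
  refine ⟨m, ?_⟩
  by_contra hne
  exact hs (mem_closure_Icc_iff.mpr ⟨m, by omega, by omega⟩)

theorem forall_notMem_closure_Icc_iff (hab : a ≤ b) (hb : 0 < b) {ℓ m : ℕ} (hℓ : 0 < ℓ) :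
    (∀ k < ℓ, m * b + 1 + k ∉ AddSubmonoid.closure (Set.Icc a b)) ↔ m * b + ℓ < (m + 1) * a := by
  constructor
  · intro hgap
    by_contra! hlong
    -- the first element of block `m + 1` beyond `m b` is a member within distance `ℓ`
    have hblock : (m + 1) * a ≤ (m + 1) * b := Nat.mul_le_mul_left _ hab
    refine hgap (max ((m + 1) * a) (m * b + 1) - (m * b + 1)) (by omega) ?_
    refine mem_closure_Icc_iff.mpr ⟨m + 1, ?_, ?_⟩ <;> simp only [add_one_mul] at * <;> omega
  · intro hshort k hk hmem
    obtain ⟨m', hlo, hhi⟩ := mem_closure_Icc_iff.mp hmem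
    rcases le_or_gt m' m with hle | hlt
    · have := Nat.mul_le_mul_right b hle
      omega
    · have : (m + 1) * a ≤ m' * a := Nat.mul_le_mul_right a hlt
      omega

theorem gapRunStarts_closure_Icc (hab : a ≤ b) (hb : 0 < b) {ℓ : ℕ} (hℓ : 0 < ℓ) :
    {s : ℕ | (∀ k < ℓ, s + k ∉ (AddSubmonoid.closure (Set.Icc a b) : Set ℕ)) ∧
        (s = 0 ∨ s - 1 ∈ (AddSubmonoid.closure (Set.Icc a b) : Set ℕ))} =
      (fun m => m * b + 1) '' {m | m * b + ℓ < (m + 1) * a} := by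
  ext s
  simp only [SetLike.mem_coe, Set.mem_ofPred_eq, Set.mem_image]
  constructor
  · rintro ⟨hgap, hstart⟩
    have hs : s ∉ AddSubmonoid.closure (Set.Icc a b) := by simpa using hgap 0 hℓ
    have hs0 : s ≠ 0 := by
      rintro rfl
      exact hs (zero_mem _)
    obtain ⟨m, rfl⟩ := eq_mul_add_one_of_notMem_of_sub_one_mem hs (hstart.resolve_left hs0)
    exact ⟨m, (forall_notMem_closure_Icc_iff hab hb hℓ).mp hgap, rfl⟩
  · rintro ⟨m, hm, rfl⟩
    refine ⟨(forall_notMem_closure_Icc_iff hab hb hℓ).mpr hm, Or.inr ?_⟩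
    rw [Nat.add_sub_cancel]
    exact mem_closure_Icc_iff.mpr ⟨m, Nat.mul_le_mul_left m hab, le_rfl⟩

theorem nGapIntervals_closure_Icc (hab : a ≤ b) (hb : 0 < b) {ℓ : ℕ} (hℓ : 0 < ℓ) :
    nGapIntervals (AddSubmonoid.closure (Set.Icc a b)) ℓ =
      Nat.card {m | m * b + ℓ < (m + 1) * a} := by
  have hinj : Function.Injective (fun m : ℕ => m * b + 1) := fun p q hpq =>
    Nat.eq_of_mul_eq_mul_right hb (Nat.add_right_cancel hpq)
  rw [nGapIntervals, gapRunStarts_closure_Icc hab hb hℓ, Nat.card_image_of_injective hinj]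

theorem mul_add_lt_succ_mul_iff (hab : a < b) {ℓ m : ℕ} :
    m * b + ℓ < (m + 1) * a ↔ ℓ < a ∧ m ≤ (a - 1 - ℓ) / (b - a) := by
  have hsplit : m * b = m * a + m * (b - a) := by
    rw [← Nat.mul_add, Nat.add_sub_cancel' hab.le]
  rw [Nat.le_div_iff_mul_le (Nat.sub_pos_of_lt hab), add_one_mul, hsplit]
  omega

end IntervalSemigroup

open IntervalSemigroup in
theorem interval_generated_gap_intervals (a x : ℕ) (ha : 2 ≤ a) (hx : 2 ≤ x) (ℓ : ℕ)
    (Λ : Set ℕ)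
    (hΛ : Λ = (AddSubmonoid.closure (Set.Icc a (a + x - 1)) : AddSubmonoid ℕ)) :
    (1 ≤ ℓ → ℓ ≤ a - 1 → nGapIntervals Λ ℓ = (a - 1 - ℓ) / (x - 1) + 1) ∧
      (a ≤ ℓ → nGapIntervals Λ ℓ = 0) := by
  subst hΛ
  have hab : a < a + x - 1 := by omega
  have hcount : ∀ ℓ, 0 < ℓ → nGapIntervals (AddSubmonoid.closure (Set.Icc a (a + x - 1))) ℓ =
      Nat.card {m | ℓ < a ∧ m ≤ (a - 1 - ℓ) / (x - 1)} := fun ℓ hℓ => by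
    simp only [nGapIntervals_closure_Icc hab.le (by omega) hℓ, mul_add_lt_succ_mul_iff hab,
      show a + x - 1 - a = x - 1 by omega]
  constructor
  · intro hℓ hℓa
    have hIic :
        {m | ℓ < a ∧ m ≤ (a - 1 - ℓ) / (x - 1)} = Set.Iic ((a - 1 - ℓ) / (x - 1)) := by
      ext m
      simp [show ℓ < a by omega]
    rw [hcount ℓ hℓ, hIic]
    simp
  · intro hℓa
    rw [hcount ℓ (by omega)]
    simp [show ¬ℓ < a by omega]
end

section
/- The numerical semigroup generated by the interval {a, a+1, …, a+x-1} equals {0} ∪ ⋃_{k≥1} {ka, ka+1, …, ka + k(x-1)}. -/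
/-! A sum of `k` elements of `[a, a + d]` lies in `[k a, k a + k d]`; conversely every element of that
interval is such a sum, as one summand can be split off leaving a remainder in `[(k-1) a, (k-1) a + (k-1) d]`. -/

open Set

namespace Nat

theorem Icc_mul_add_mem_Icc_mul {a d k l m n : ℕ} (hm : m ∈ Icc (k * a) (k * a + k * d))
    (hn : n ∈ Icc (l * a) (l * a + l * d)) :
    m + n ∈ Icc ((k + l) * a) ((k + l) * a + (k + l) * d) := by
  simp only [mem_Icc, add_mul] at *
  omega

-- The summand split off is `max a (n - k * (a + d))`.
theorem exists_add_of_mem_Icc_succ_mul {a d k n : ℕ}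
    (hn : n ∈ Icc ((k + 1) * a) ((k + 1) * a + (k + 1) * d)) :
    ∃ m ∈ Icc a (a + d), ∃ r ∈ Icc (k * a) (k * a + k * d), n = m + r := by
  refine ⟨max a (n - k * (a + d)), ?_, n - max a (n - k * (a + d)), ?_, ?_⟩
  all_goals simp only [mem_Icc, add_mul, one_mul, mul_add] at *; omega

theorem mem_closure_Icc_iff {a d n : ℕ} :
    n ∈ AddSubmonoid.closure (Icc a (a + d)) ↔ ∃ k, n ∈ Icc (k * a) (k * a + k * d) := by
  constructor
  · intro hn
    induction hn using AddSubmonoid.closure_induction with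
    | mem m hm => exact ⟨1, by simpa using hm⟩
    | zero => exact ⟨0, by simp⟩
    | add m n _ _ hm hn =>
      obtain ⟨k, hk⟩ := hm
      obtain ⟨l, hl⟩ := hn
      exact ⟨k + l, Icc_mul_add_mem_Icc_mul hk hl⟩
  · rintro ⟨k, hk⟩
    induction k generalizing n with
    | zero =>
      simp only [zero_mul, add_zero, Icc_self, mem_singleton_iff] at hk
      exact hk ▸ zero_mem _
    | succ k ih =>
      obtain ⟨m, hm, r, hr, rfl⟩ := exists_add_of_mem_Icc_succ_mul hk
      exact add_mem (AddSubmonoid.subset_closure hm) (ih hr)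

end Nat

theorem interval_generated_semigroup_description_general (a x : ℕ) (hx : 2 ≤ x) :
    ((AddSubmonoid.closure (Set.Icc a (a + x - 1)) : AddSubmonoid ℕ) : Set ℕ) =
      {0} ∪ ⋃ k ∈ {k : ℕ | 1 ≤ k}, Set.Icc (k * a) (k * a + k * (x - 1)) := by
  ext n
  rw [Nat.add_sub_assoc (by omega), SetLike.mem_coe, Nat.mem_closure_Icc_iff]
  simp only [mem_union, mem_singleton_iff, mem_iUnion, mem_ofPred_eq, exists_prop]
  constructor
  · rintro ⟨_ | k, hk⟩
    · left; simpa using hk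
    · exact Or.inr ⟨k + 1, Nat.le_add_left 1 k, hk⟩
  · rintro (rfl | ⟨k, -, hk⟩)
    · exact ⟨0, by simp⟩
    · exact ⟨k, hk⟩

theorem interval_generated_semigroup_description (a x : ℕ) (ha : 2 ≤ a) (hx : 2 ≤ x) :
    ((AddSubmonoid.closure (Set.Icc a (a + x - 1)) : AddSubmonoid ℕ) : Set ℕ) =
      {0} ∪ ⋃ k ∈ {k : ℕ | 1 ≤ k}, Set.Icc (k * a) (k * a + k * (x - 1)) :=
  interval_generated_semigroup_description_general a x hx
end

section
/- Define recursively Λ₁ = ℕ₀ and Λ_m = q·Λ_{m-1} ∪ {i ∈ ℕ₀ : i ≥ q^m − q^{⌊(m+1)/2⌋}} for m ≥ 2, where q ≥ 2 is a prime power. Then the number n_ℓ of maximal intervals of consecutive gaps of Λ_m of length at least ℓ satisfies n_ℓ = q^{⌊(m+1−log_q(ℓ+1))/2⌋} − 1, for 1 ≤ ℓ with ⌊m+1−log_q(ℓ+1)⌋ ≥ 1. -/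
/-- The Weierstrass semigroups of the Garcia–Stichtenoth tower:
`Λ₁ = ℕ₀`, `Λ_m = q·Λ_{m-1} ∪ {i : i ≥ q^m − q^⌊(m+1)/2⌋}`. -/
def GS (q : ℕ) : ℕ → Set ℕ
  | 0 => Set.univ
  | 1 => Set.univ
  | (m + 2) => (fun n => q * n) '' GS q (m + 1) ∪
      {i : ℕ | q ^ (m + 2) - q ^ ((m + 3) / 2) ≤ i}

/-!
Writing `T v = q ^ m - q ^ ⌊(m + v + 1) / 2⌋`, induction on `m` shows that `n ∈ Λ_m` iff
`q ^ v ∣ n` and `T v ≤ n` for some `v`. As `T` decreases in `v`, on `[T (v + 1), T v)` the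
semigroup consists exactly of the multiples of `q ^ (v + 1)`, so every gap interval there has
length `q ^ (v + 1) - 1`. Hence the gap intervals of length `≥ ℓ` are those following the
elements of `Λ_m` below `T v`, where `q ^ v ≤ ℓ < q ^ (v + 1)`; counting these block by block
telescopes to `q ^ ⌊(m - v) / 2⌋ - 1`.
-/

open Set

def gapStarts (Λ : Set ℕ) (ℓ : ℕ) : Set ℕ :=
  {s : ℕ | (∀ k < ℓ, s + k ∉ Λ) ∧ (s = 0 ∨ s - 1 ∈ Λ)}

theorem nGapIntervals_eq_card_gapStarts (Λ : Set ℕ) (ℓ : ℕ) :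
    nGapIntervals Λ ℓ = Nat.card (gapStarts Λ ℓ) :=
  rfl

theorem Nat.add_le_of_dvd_of_lt {p a b : ℕ} (ha : p ∣ a) (hb : p ∣ b) (h : a < b) :
    a + p ≤ b := by
  have := Nat.le_of_dvd (Nat.sub_pos_of_lt h) (Nat.dvd_sub hb ha)
  omega

theorem Nat.ncard_setOf_dvd_Ico {p a b : ℕ} (hp : 0 < p) (ha : p ∣ a) (hb : p ∣ b) :
    {n ∈ Ico a b | p ∣ n}.ncard = (b - a) / p := by
  obtain ⟨x, rfl⟩ := ha
  obtain ⟨y, rfl⟩ := hb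
  have : {n ∈ Ico (p * x) (p * y) | p ∣ n} = (p * ·) '' Ico x y := by
    ext n
    constructor
    · rintro ⟨⟨hxn, hny⟩, k, rfl⟩
      exact ⟨k, ⟨Nat.le_of_mul_le_mul_left hxn hp, Nat.lt_of_mul_lt_mul_left hny⟩, rfl⟩
    · rintro ⟨k, ⟨hxk, hky⟩, rfl⟩
      exact ⟨⟨Nat.mul_le_mul_left p hxk, Nat.mul_lt_mul_of_pos_left hky hp⟩, dvd_mul_right p k⟩
  rw [this, ncard_image_of_injective _ (mul_right_injective₀ hp.ne'), Set.ncard_Ico_nat,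
    ← Nat.mul_sub, Nat.mul_div_cancel_left _ hp]

/-- Above `gsThreshold q m v`, every multiple of `q ^ v` lies in `GS q m`. -/
def gsThreshold (q m v : ℕ) : ℕ := q ^ m - q ^ ((m + v + 1) / 2)

section Threshold

variable {q m v : ℕ}

theorem gsThreshold_antitone (hq : 0 < q) : Antitone (gsThreshold q m) := fun _ _ h =>
  Nat.sub_le_sub_left (Nat.pow_le_pow_right hq (by omega)) _

theorem gsThreshold_eq_zero (hq : 0 < q) (h : m ≤ v + 1) : gsThreshold q m v = 0 :=
  Nat.sub_eq_zero_of_le (Nat.pow_le_pow_right hq (by omega))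

theorem pow_dvd_gsThreshold {w : ℕ} (hw : w ≤ v + 1) (hv : v < m) : q ^ w ∣ gsThreshold q m v :=
  Nat.dvd_sub (pow_dvd_pow q (by omega)) (pow_dvd_pow q (by omega))

theorem gsThreshold_succ_succ : gsThreshold q (m + 1) (v + 1) = q * gsThreshold q m v := by
  rw [gsThreshold, gsThreshold, Nat.mul_sub, ← pow_succ', ← pow_succ',
    show (m + 1 + (v + 1) + 1) / 2 = (m + v + 1) / 2 + 1 by omega]

theorem gsThreshold_sub_gsThreshold_succ (hq : 0 < q) (h : v + 2 ≤ m) :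
    gsThreshold q m v - gsThreshold q m (v + 1) =
      q ^ (v + 1) * (q ^ ((m - v) / 2) - q ^ ((m - v - 1) / 2)) := by
  rw [Nat.mul_sub, ← pow_add, ← pow_add, gsThreshold, gsThreshold,
    show v + 1 + (m - v) / 2 = (m + (v + 1) + 1) / 2 by omega,
    show v + 1 + (m - v - 1) / 2 = (m + v + 1) / 2 by omega]
  have := Nat.pow_le_pow_right hq (show (m + v + 1) / 2 ≤ (m + (v + 1) + 1) / 2 by omega)
  have := Nat.pow_le_pow_right hq (show (m + (v + 1) + 1) / 2 ≤ m by omega)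
  omega

end Threshold

section Semigroup

variable {q m : ℕ}

theorem mem_GS_iff (hq : 0 < q) (hm : 1 ≤ m) {n : ℕ} :
    n ∈ GS q m ↔ ∃ v, q ^ v ∣ n ∧ gsThreshold q m v ≤ n := by
  induction m, hm using Nat.le_induction generalizing n with
  | base => simpa [GS] using ⟨0, by simp [gsThreshold]⟩
  | succ m hm ih =>
    obtain ⟨k, rfl⟩ : ∃ k, m = k + 1 := ⟨m - 1, by omega⟩
    have h0 : gsThreshold q (k + 2) 0 = q ^ (k + 2) - q ^ ((k + 3) / 2) := rfl
    simp only [GS, mem_union, mem_image, mem_ofPred_eq, ← h0]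
    constructor
    · rintro (⟨n, hn, rfl⟩ | hn)
      · obtain ⟨v, hv, hTv⟩ := ih.mp hn
        refine ⟨v + 1, ?_, ?_⟩
        · rw [pow_succ']
          exact mul_dvd_mul_left q hv
        · rw [gsThreshold_succ_succ]
          exact Nat.mul_le_mul_left q hTv
      · exact ⟨0, one_dvd n, hn⟩
    · rintro ⟨_ | v, hv, hTv⟩
      · exact Or.inr hTv
      · obtain ⟨n, rfl⟩ : q ∣ n := (dvd_pow_self q v.succ_ne_zero).trans hv
        rw [pow_succ', mul_dvd_mul_iff_left hq.ne'] at hv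
        rw [gsThreshold_succ_succ] at hTv
        exact Or.inl ⟨n, ih.mpr ⟨v, hv, Nat.le_of_mul_le_mul_left hTv hq⟩, rfl⟩

theorem zero_mem_GS (hq : 0 < q) (hm : 1 ≤ m) : 0 ∈ GS q m :=
  (mem_GS_iff hq hm).mpr ⟨m, dvd_zero _, (gsThreshold_eq_zero hq (by omega)).le⟩

theorem add_pow_mem_GS (hq : 0 < q) (hm : 1 ≤ m) {b w : ℕ} (hb : b ∈ GS q m)
    (hw : gsThreshold q m w ≤ b) : b + q ^ w ∈ GS q m := by
  obtain ⟨v, hv, hTv⟩ := (mem_GS_iff hq hm).mp hb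
  refine (mem_GS_iff hq hm).mpr ⟨min v w, ?_, ?_⟩
  · exact dvd_add ((pow_dvd_pow q (min_le_left v w)).trans hv) (pow_dvd_pow q (min_le_right v w))
  · rcases le_total v w with h | h
    · simpa [min_eq_left h] using le_add_right hTv
    · simpa [min_eq_right h] using le_add_right hw

theorem pow_succ_dvd_of_mem_GS (hq : 0 < q) (hm : 1 ≤ m) {b v : ℕ} (hb : b ∈ GS q m)
    (hbv : b < gsThreshold q m v) : q ^ (v + 1) ∣ b := by
  obtain ⟨w, hw, hTw⟩ := (mem_GS_iff hq hm).mp hb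
  have hvw : v < w := lt_of_not_ge fun h => (gsThreshold_antitone hq h).not_gt (hTw.trans_lt hbv)
  exact (pow_dvd_pow q hvw).trans hw

theorem mem_GS_iff_dvd_of_mem_Ico (hq : 0 < q) (hm : 1 ≤ m) {n v : ℕ}
    (hn : n ∈ Ico (gsThreshold q m (v + 1)) (gsThreshold q m v)) :
    n ∈ GS q m ↔ q ^ (v + 1) ∣ n :=
  ⟨fun h => pow_succ_dvd_of_mem_GS hq hm h hn.2,
    fun h => (mem_GS_iff hq hm).mpr ⟨v + 1, h, hn.1⟩⟩

theorem notMem_GS_of_lt_add_pow (hq : 0 < q) (hm : 1 ≤ m) {b n v : ℕ} (hb : b ∈ GS q m)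
    (hbv : b < gsThreshold q m v) (hbn : b < n) (hnb : n < b + q ^ (v + 1)) : n ∉ GS q m := by
  intro hn
  have hdvd_b := pow_succ_dvd_of_mem_GS hq hm hb hbv
  have hvm : v < m := by
    by_contra! h
    rw [gsThreshold_eq_zero hq (by omega)] at hbv
    omega
  -- `T v` is itself a multiple of `q ^ (v + 1)`, so the whole run after `b` stays below it.
  have hnv : n < gsThreshold q m v :=
    hnb.trans_le (Nat.add_le_of_dvd_of_lt hdvd_b (pow_dvd_gsThreshold le_rfl hvm) hbv)
  have := Nat.le_of_dvd (Nat.sub_pos_of_lt hbn)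
    (Nat.dvd_sub (pow_succ_dvd_of_mem_GS hq hm hn hnv) hdvd_b)
  omega

end Semigroup

section Counting

variable {q m : ℕ}

theorem ncard_GS_inter_Ico (hq : 0 < q) {v : ℕ} (hv : v + 2 ≤ m) :
    (GS q m ∩ Ico (gsThreshold q m (v + 1)) (gsThreshold q m v)).ncard =
      q ^ ((m - v) / 2) - q ^ ((m - v - 1) / 2) := by
  have hpos : 0 < q ^ (v + 1) := pow_pos hq _
  have hblock : GS q m ∩ Ico (gsThreshold q m (v + 1)) (gsThreshold q m v) =
      {n ∈ Ico (gsThreshold q m (v + 1)) (gsThreshold q m v) | q ^ (v + 1) ∣ n} := by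
    ext n
    refine ⟨fun ⟨h, hn⟩ => ⟨hn, ?_⟩, fun ⟨hn, h⟩ => ⟨?_, hn⟩⟩
    · exact (mem_GS_iff_dvd_of_mem_Ico hq (by omega) hn).mp h
    · exact (mem_GS_iff_dvd_of_mem_Ico hq (by omega) hn).mpr h
  rw [hblock, Nat.ncard_setOf_dvd_Ico hpos (pow_dvd_gsThreshold (Nat.le_succ _) (by omega))
    (pow_dvd_gsThreshold le_rfl (by omega)), gsThreshold_sub_gsThreshold_succ hq hv,
    Nat.mul_div_cancel_left _ hpos]

theorem ncard_GS_inter_Iio (hq : 0 < q) {v : ℕ} (hv : v < m) :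
    (GS q m ∩ Iio (gsThreshold q m v)).ncard = q ^ ((m - v) / 2) - 1 := by
  replace hv : v ≤ m - 1 := Nat.le_sub_one_of_lt hv
  induction hv using Nat.decreasingInduction with
  | self =>
    rw [gsThreshold_eq_zero hq (by omega), show (m - (m - 1)) / 2 = 0 by omega]
    simp
  | of_succ v hv ih =>
    rw [← Iio_union_Ico_eq_Iio (gsThreshold_antitone hq v.le_succ), inter_union_distrib_left,
      ncard_union_eq ((Iio_disjoint_Ici le_rfl).mono inter_subset_right
        (inter_subset_right.trans Ico_subset_Ici_self))
      ((finite_Iio _).subset inter_subset_right) ((finite_Ico _ _).subset inter_subset_right),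
      ih, ncard_GS_inter_Ico hq (by omega), Nat.sub_sub]
    have := Nat.one_le_pow ((m - (v + 1)) / 2) q hq
    have := Nat.pow_le_pow_right hq (show (m - (v + 1)) / 2 ≤ (m - v) / 2 by omega)
    omega

theorem gapStarts_GS_eq_image (hq : 0 < q) (hm : 1 ≤ m) {ℓ v : ℕ} (hlow : q ^ v ≤ ℓ)
    (hup : ℓ < q ^ (v + 1)) :
    gapStarts (GS q m) ℓ = (· + 1) '' (GS q m ∩ Iio (gsThreshold q m v)) := by
  have hqv := Nat.one_le_pow v q hq
  ext s
  constructor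
  · rintro ⟨hgap, hprev⟩
    have hs : s ≠ 0 := by
      rintro rfl
      exact hgap 0 (by omega) (zero_mem_GS hq hm)
    have hb : s - 1 ∈ GS q m := hprev.resolve_left hs
    refine ⟨s - 1, ⟨hb, mem_Iio.mpr (lt_of_not_ge fun hT => ?_)⟩, Nat.sub_add_cancel (by omega)⟩
    -- past `T v` the next element is at most `q ^ v` away, too close for a gap of length `ℓ`
    refine hgap (q ^ v - 1) (by omega) ?_
    rw [show s + (q ^ v - 1) = s - 1 + q ^ v by omega]
    exact add_pow_mem_GS hq hm hb hT
  · rintro ⟨b, ⟨hb, hbT⟩, rfl⟩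
    dsimp only
    refine ⟨fun k hk => notMem_GS_of_lt_add_pow hq hm hb hbT (by omega) (by omega), ?_⟩
    exact Or.inr (by simpa using hb)

end Counting

theorem garcia_stichtenoth_gap_intervals_general (q : ℕ) (hq : 2 ≤ q)
    (m ℓ : ℕ) (hℓ : 1 ≤ ℓ)
    (hlog : Nat.clog q (ℓ + 1) ≤ m) :
    nGapIntervals (GS q m) ℓ = q ^ ((m + 1 - Nat.clog q (ℓ + 1)) / 2) - 1 := by
  set t := Nat.clog q (ℓ + 1)
  have ht : 0 < t := Nat.clog_pos hq (by omega)
  have hlow : q ^ (t - 1) ≤ ℓ :=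
    Nat.le_of_lt_succ ((Nat.lt_clog_iff_pow_lt hq).mp (show t - 1 < t by omega))
  have hup : ℓ < q ^ (t - 1 + 1) := by
    rw [Nat.sub_add_cancel ht]
    exact Nat.le_pow_clog hq _
  rw [nGapIntervals_eq_card_gapStarts, gapStarts_GS_eq_image (by omega) (by omega) hlow hup,
    Nat.card_coe_set_eq, ncard_image_of_injective _ (add_left_injective 1),
    ncard_GS_inter_Iio (by omega) (show t - 1 < m by omega), show m - (t - 1) = m + 1 - t by omega]

theorem garcia_stichtenoth_gap_intervals (q : ℕ) (hq : 2 ≤ q) (hpp : IsPrimePow q)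
    (m ℓ : ℕ) (hm : 1 ≤ m) (hℓ : 1 ≤ ℓ)
    (hcond : 1 ≤ m + 1 - Nat.clog q (ℓ + 1)) (hlog : Nat.clog q (ℓ + 1) ≤ m) :
    nGapIntervals (GS q m) ℓ = q ^ ((m + 1 - Nat.clog q (ℓ + 1)) / 2) - 1 :=
  garcia_stichtenoth_gap_intervals_general q hq m ℓ hℓ hlog
end

section
/- Let Λ be a numerical semigroup with genus g, conductor c, and elements λ₀=0<λ₁<⋯, and let ν_i = #{λⱼ ≤ λᵢ : λᵢ − λⱼ ∈ Λ}. If λᵢ ≥ c then ν_i = λᵢ − 2g + 1 + G(i), where G(i) is the number of pairs of gaps summing to λᵢ; in particular ν_i ≥ λᵢ − 2g + 1. -/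
/-!
Split `[0, λᵢ]` according to whether `x` and `λᵢ - x` lie in `Λ`. Since every gap lies below
`c ≤ λᵢ`, both "`x` is a gap" and "`λᵢ - x` is a gap" hold for exactly `g` values of `x`, and
inclusion–exclusion over these two sets of size `g` gives `(λᵢ + 1) - ν_i = 2g - G(i)`.
-/

open Finset

lemma card_filter_and_add_card_filter_not_add_card_filter_not {α : Type*} (s : Finset α)
    (p q : α → Prop) [DecidablePred p] [DecidablePred q] :
    #{x ∈ s | p x ∧ q x} + #{x ∈ s | ¬p x} + #{x ∈ s | ¬q x} = #s + #{x ∈ s | ¬p x ∧ ¬q x} := by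
  rw [card_filter, card_filter, card_filter, card_filter, card_eq_sum_ones, ← sum_add_distrib,
    ← sum_add_distrib, ← sum_add_distrib]
  refine sum_congr rfl fun x _ => ?_
  by_cases hp : p x <;> by_cases hq : q x <;> simp [hp, hq]

lemma card_filter_range_reflect (N : ℕ) (p : ℕ → Prop) [DecidablePred p] :
    #{x ∈ range (N + 1) | p (N - x)} = #{x ∈ range (N + 1) | p x} := by
  simpa only [card_filter, Nat.add_sub_cancel] using
    sum_range_reflect (fun x => if p x then 1 else 0) (N + 1)

lemma natCard_setOf_le_and (N : ℕ) (p : ℕ → Prop) [DecidablePred p] :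
    Nat.card {x : ℕ | x ≤ N ∧ p x} = #{x ∈ range (N + 1) | p x} := by
  have hset : {x : ℕ | x ≤ N ∧ p x} = ↑({x ∈ range (N + 1) | p x}) := by
    ext x
    simp
  rw [hset, Nat.card_coe_set_eq, Set.ncard_coe_finset]

lemma natCard_setOf_add_eq (N : ℕ) (p r : ℕ → Prop) [DecidablePred p] [DecidablePred r] :
    Nat.card {q : ℕ × ℕ | p q.1 ∧ r q.2 ∧ q.1 + q.2 = N} =
      #{x ∈ range (N + 1) | p x ∧ r (N - x)} := by
  have hset : {q : ℕ × ℕ | p q.1 ∧ r q.2 ∧ q.1 + q.2 = N} =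
      ↑({q ∈ antidiagonal N | p q.1 ∧ r q.2}) := by
    ext q
    simp [and_comm, and_assoc]
  rw [hset, Nat.card_coe_set_eq, Set.ncard_coe_finset, card_filter, card_filter,
    Nat.sum_antidiagonal_eq_sum_range_succ_mk]

theorem natCard_sumPairs_add_two_mul_natCard_gaps (Λ : Set ℕ) (N : ℕ)
    (hgaps : ∀ n ∉ Λ, n ≤ N) :
    Nat.card {x : ℕ | x ∈ Λ ∧ x ≤ N ∧ N - x ∈ Λ} + 2 * Nat.card {n : ℕ | n ∉ Λ} =
      N + 1 + Nat.card {p : ℕ × ℕ | p.1 ∉ Λ ∧ p.2 ∉ Λ ∧ p.1 + p.2 = N} := by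
  classical
  have hgaps_card : Nat.card {n : ℕ | n ∉ Λ} = #{x ∈ range (N + 1) | x ∉ Λ} := by
    have hset : {n : ℕ | n ∉ Λ} = {n : ℕ | n ≤ N ∧ n ∉ Λ} :=
      Set.ext fun n => ⟨fun hn => ⟨hgaps n hn, hn⟩, And.right⟩
    rw [hset, natCard_setOf_le_and]
  have hsum_card : Nat.card {x : ℕ | x ∈ Λ ∧ x ≤ N ∧ N - x ∈ Λ} =
      #{x ∈ range (N + 1) | x ∈ Λ ∧ N - x ∈ Λ} := by
    have hset : {x : ℕ | x ∈ Λ ∧ x ≤ N ∧ N - x ∈ Λ} = {x : ℕ | x ≤ N ∧ x ∈ Λ ∧ N - x ∈ Λ} :=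
      Set.ext fun x => and_left_comm
    rw [hset, natCard_setOf_le_and]
  rw [hsum_card, hgaps_card, natCard_setOf_add_eq N (· ∉ Λ) (· ∉ Λ), two_mul]
  nth_rw 2 [← card_filter_range_reflect N (· ∉ Λ)]
  rw [← add_assoc, card_filter_and_add_card_filter_not_add_card_filter_not, card_range]

theorem nu_formula_beyond_conductor_general
    (Λ : Set ℕ)
    (g : ℕ) (hg : g = Nat.card {n : ℕ | n ∉ Λ})
    (c : ℕ) (hc : IsLeast {n : ℕ | ∀ m : ℕ, n ≤ m → m ∈ Λ} c)
    (lam : ℕ → ℕ)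
    (i : ℕ) (hi : c ≤ lam i)
    (nu Gi : ℕ)
    (hnu : nu = Nat.card {x : ℕ | x ∈ Λ ∧ x ≤ lam i ∧ lam i - x ∈ Λ})
    (hGi : Gi = Nat.card {p : ℕ × ℕ | p.1 ∉ Λ ∧ p.2 ∉ Λ ∧ p.1 + p.2 = lam i}) :
    (nu : ℤ) = (lam i : ℤ) - 2 * g + 1 + Gi ∧ (lam i : ℤ) - 2 * g + 1 ≤ (nu : ℤ) := by
  have hgaps : ∀ n ∉ Λ, n ≤ lam i := fun n hn =>
    (not_le.mp fun hcn => hn (hc.1 n hcn)).le.trans hi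
  have key := natCard_sumPairs_add_two_mul_natCard_gaps Λ (lam i) hgaps
  rw [← hnu, ← hg, ← hGi] at key
  omega

theorem nu_formula_beyond_conductor
    (Λ : Set ℕ) (h0 : 0 ∈ Λ) (hadd : ∀ a ∈ Λ, ∀ b ∈ Λ, a + b ∈ Λ)
    (hfin : {n : ℕ | n ∉ Λ}.Finite)
    (g : ℕ) (hg : g = Nat.card {n : ℕ | n ∉ Λ})
    (c : ℕ) (hc : IsLeast {n : ℕ | ∀ m : ℕ, n ≤ m → m ∈ Λ} c)
    (lam : ℕ → ℕ) (hmono : StrictMono lam) (hrange : Set.range lam = Λ)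
    (i : ℕ) (hi : c ≤ lam i)
    (nu Gi : ℕ)
    (hnu : nu = Nat.card {x : ℕ | x ∈ Λ ∧ x ≤ lam i ∧ lam i - x ∈ Λ})
    (hGi : Gi = Nat.card {p : ℕ × ℕ | p.1 ∉ Λ ∧ p.2 ∉ Λ ∧ p.1 + p.2 = lam i}) :
    (nu : ℤ) = (lam i : ℤ) - 2 * g + 1 + Gi ∧ (lam i : ℤ) - 2 * g + 1 ≤ (nu : ℤ) :=
  nu_formula_beyond_conductor_general Λ g hg c hc lam i hi nu Gi hnu hGi
end
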